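/- arXiv:1908.07331 — 3 statements merged into one kernel-verified Lean document; each statement's English description precedes it below -/
import Mathlib

section
/- Let R be a GCD domain, g(t) ∈ R[t] monic of degree n, f(t) ∈ R[t], and let h(t) be the unique polynomial of degree less than n with f(t) ≡ h(t) mod g(t). Then the gcd of all entries of the matrix f(C_g) equals (up to units of R) the content of h(t). -/
/-!
Write `n = deg g`. Listing the coefficients of `p mod g` from `X ^ (n - 1)` down to `1` as a
row vector, right multiplication by `C_g` corresponds to multiplying `p` by `X` modulo `g`.
Hence row `i` of `f(C_g)` lists the coefficients of `X ^ (n - 1 - i) * f mod g`; the last row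
is `h` itself, so every common divisor of the entries divides the content of `h`. Conversely,
`g(C_g) = 0` gives `f(C_g) = h(C_g) = ∑ h_k C_g ^ k`, whose entries are `R`-linear combinations
of the coefficients of `h`.
-/

open Polynomial Matrix

def companion {R : Type*} [CommRing R] (g : R[X]) :
    Matrix (Fin g.natDegree) (Fin g.natDegree) R :=
  Matrix.of fun i j =>
    if (i : ℕ) = 0 then -g.coeff (g.natDegree - 1 - (j : ℕ))
    else if (i : ℕ) = (j : ℕ) + 1 then 1 else 0

namespace Polynomial

theorem dvd_aeval_apply_of_dvd_content {R : Type*} [CommRing R] [IsDomain R]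
    [NormalizedGCDMonoid R] {ι : Type*} [Fintype ι] [DecidableEq ι] (M : Matrix ι ι R)
    {p : R[X]} {d : R} (hd : d ∣ p.content) (i j : ι) : d ∣ aeval M p i j := by
  obtain ⟨q, rfl⟩ := dvd_content_iff_C_dvd.mp hd
  rw [map_mul, aeval_C, ← Algebra.smul_def, Matrix.smul_apply, smul_eq_mul]
  exact dvd_mul_right d _

section Companion

variable {R : Type*} [CommRing R] {g : R[X]}

theorem modByMonic_X_mul (hg : g.Monic) (hn : 0 < g.natDegree) (p : R[X]) :
    (X * p) %ₘ g = X * (p %ₘ g) - C ((p %ₘ g).coeff (g.natDegree - 1)) * g := by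
  nontriviality R
  set r := p %ₘ g
  set c := r.coeff (g.natDegree - 1)
  have hr : r.natDegree < g.natDegree :=
    natDegree_modByMonic_lt p hg fun h => by simp [h] at hn
  have hdeg : (X * r - C c * g).degree < g.degree := by
    rw [degree_eq_natDegree hg.ne_zero, degree_lt_iff_coeff_zero]
    intro m hm
    obtain ⟨k, rfl⟩ : ∃ k, m = k + 1 := ⟨m - 1, by omega⟩
    rw [coeff_sub, coeff_X_mul, coeff_C_mul]
    have hm : g.natDegree ≤ k + 1 := mod_cast hm
    rcases hm.eq_or_lt with hk | hk
    · rw [← hk, hg.coeff_natDegree, mul_one, show k = g.natDegree - 1 by omega, sub_self]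
    · rw [coeff_eq_zero_of_natDegree_lt (by omega), coeff_eq_zero_of_natDegree_lt hk, mul_zero,
        sub_zero]
  rw [← (modByMonic_eq_self_iff hg).mpr hdeg]
  refine modByMonic_eq_of_dvd_sub hg ?_
  obtain ⟨q, hq⟩ : g ∣ p - r := by simpa using (dvd_modByMonic_sub p g).neg_right
  exact ⟨X * q + C c, by linear_combination X * hq⟩

/-- Coordinates of `p %ₘ g` in the basis `X ^ (n - 1), …, X, 1` of `R[X] ⧸ (g)`,
where `n = g.natDegree`. -/
noncomputable def revRemainder (g : R[X]) : R[X] →ₗ[R] Fin g.natDegree → R :=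
  LinearMap.pi fun j => (lcoeff R (g.natDegree - 1 - j)).comp (modByMonicHom g)

@[simp]
theorem revRemainder_apply (p : R[X]) (j : Fin g.natDegree) :
    revRemainder g p j = (p %ₘ g).coeff (g.natDegree - 1 - j) :=
  rfl

theorem revRemainder_vecMul_companion (hg : g.Monic) (p : R[X]) :
    revRemainder g p ᵥ* companion g = revRemainder g (X * p) := by
  ext j
  have hn : 0 < g.natDegree := j.pos
  simp only [vecMul, dotProduct, revRemainder_apply, modByMonic_X_mul hg hn]
  set r := p %ₘ g
  have hsplit : ∀ i : Fin g.natDegree, r.coeff (g.natDegree - 1 - i) * companion g i j =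
      (if i = ⟨0, hn⟩ then -(r.coeff (g.natDegree - 1) * g.coeff (g.natDegree - 1 - j))
        else 0) + (if (i : ℕ) = j + 1 then r.coeff (g.natDegree - 1 - i) else 0) := by
    intro i
    simp only [companion, of_apply, Fin.ext_iff]
    split_ifs <;> simp_all
  simp only [hsplit, Finset.sum_add_distrib, Finset.sum_ite_eq', Finset.mem_univ, if_true]
  rw [Fin.sum_univ_eq_sum_range (fun k => if k = j + 1 then r.coeff (g.natDegree - 1 - k) else 0),
    Finset.sum_ite_eq', coeff_sub, coeff_C_mul]
  split_ifs with hj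
  · rw [Finset.mem_range] at hj
    rw [show g.natDegree - 1 - j = g.natDegree - 1 - (j + 1) + 1 by omega, coeff_X_mul]
    ring
  · rw [Finset.mem_range] at hj
    rw [show g.natDegree - 1 - j = 0 by omega, coeff_X_mul_zero]
    ring

theorem revRemainder_vecMul_companion_pow (hg : g.Monic) (p : R[X]) (k : ℕ) :
    revRemainder g p ᵥ* companion g ^ k = revRemainder g (X ^ k * p) := by
  induction k generalizing p with
  | zero => rw [pow_zero, pow_zero, vecMul_one, one_mul]
  | succ k ih =>
    rw [pow_succ', ← vecMul_vecMul, revRemainder_vecMul_companion hg, ih, pow_succ, mul_assoc]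

theorem revRemainder_vecMul_aeval_companion (hg : g.Monic) (p q : R[X]) :
    revRemainder g p ᵥ* aeval (companion g) q = revRemainder g (q * p) := by
  induction q using Polynomial.induction_on' with
  | add q₁ q₂ h₁ h₂ => rw [map_add, vecMul_add, h₁, h₂, add_mul, map_add]
  | monomial k a =>
    rw [aeval_monomial, ← Algebra.smul_def, vecMul_smul, revRemainder_vecMul_companion_pow hg,
      ← C_mul_X_pow_eq_monomial, mul_assoc, ← smul_eq_C_mul, map_smul]

theorem revRemainder_X_pow (hg : g.Monic) (i : Fin g.natDegree) :
    revRemainder g (X ^ (g.natDegree - 1 - i)) = Pi.single i 1 := by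
  nontriviality R
  have hlt : (X ^ (g.natDegree - 1 - i) : R[X]).degree < g.degree := by
    rw [degree_X_pow, degree_eq_natDegree hg.ne_zero]
    exact_mod_cast (show g.natDegree - 1 - i < g.natDegree by omega)
  ext j
  rw [revRemainder_apply, (modByMonic_eq_self_iff hg).mpr hlt, coeff_X_pow, Pi.single_apply]
  simp only [Fin.ext_iff]
  congr 1
  simp only [eq_iff_iff]
  omega

theorem aeval_companion_apply (hg : g.Monic) (q : R[X]) (i j : Fin g.natDegree) :
    aeval (companion g) q i j =
      ((X ^ (g.natDegree - 1 - i) * q) %ₘ g).coeff (g.natDegree - 1 - j) :=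
  calc aeval (companion g) q i j = (Pi.single i 1 ᵥ* aeval (companion g) q) j := by
        rw [single_one_vecMul, row_apply]
    _ = _ := by rw [← revRemainder_X_pow hg, revRemainder_vecMul_aeval_companion hg, mul_comm,
        revRemainder_apply]

theorem aeval_companion_self (hg : g.Monic) : aeval (companion g) g = 0 := by
  ext i j
  rw [aeval_companion_apply hg, mul_self_modByMonic hg, coeff_zero, Matrix.zero_apply]

theorem coeff_modByMonic_eq_aeval_companion (hg : g.Monic) (q : R[X]) {m : ℕ}
    (hm : m < g.natDegree) :
    (q %ₘ g).coeff m =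
      aeval (companion g) q ⟨g.natDegree - 1, by omega⟩ ⟨g.natDegree - 1 - m, by omega⟩ := by
  rw [aeval_companion_apply hg, Nat.sub_self, pow_zero, one_mul]
  congr 1
  simp only
  omega

end Companion

end Polynomial

/-- Over a GCD domain, the gcd of the entries of `f(C_g)` (the first determinantal
divisor) is, up to units, the content of the remainder `h = f mod g` of `f` modulo the
monic polynomial `g`: an element `d` divides all entries of `f(C_g)` iff it divides
the content of `h`. -/
theorem stmt11 {R : Type*} [CommRing R] [IsDomain R] [NormalizedGCDMonoid R]
    (g f : R[X]) (hg : g.Monic) :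
    ∀ d : R,
      (∀ i j : Fin g.natDegree, d ∣ Polynomial.aeval (companion g) f i j) ↔
        d ∣ (f %ₘ g).content := by
  intro d
  constructor
  · intro hd
    refine dvd_content_iff_C_dvd.mpr ((C_dvd_iff_dvd_coeff _ _).mpr fun m => ?_)
    rcases lt_or_ge m g.natDegree with hm | hm
    · exact coeff_modByMonic_eq_aeval_companion hg f hm ▸ hd _ _
    · rw [coeff_eq_zero_of_degree_lt ((degree_modByMonic_lt f hg).trans_le
        (degree_le_natDegree.trans (Nat.cast_le.mpr hm)))]
      exact dvd_zero d
  · intro hd i j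
    rw [← aeval_modByMonic_eq_self_of_root (aeval_companion_self hg)]
    exact dvd_aeval_apply_of_dvd_content _ hd i j
end

section
/- Let p be prime, h ≥ 1, k ≥ 1, n = p^h, m = n·p^k. Then Φ_m(t) ≡ p (mod Φ_n(t)) in ℤ[t], and consequently Φ_m(C_{Φ_n}) = p·I. -/
/-!
`Φ_{p^l}(X) = ∑_{i<p} X^{p^(l-1) i}`, and for `h < l` every summand is `≡ 1` modulo
`X^{p^h} - 1`, hence modulo `Φ_{p^h}`; so `Φ_{p^l} ≡ p (mod Φ_{p^h})`.

For the matrix statement, the companion matrix of a monic `g` is, after transposing and reversing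
the order of the basis, the matrix of multiplication by the root in the power basis of
`R[X]/(g)`. Its characteristic polynomial is therefore the minimal polynomial of that root,
which is `g`, and Cayley–Hamilton gives `g(C_g) = 0`.
-/

open Polynomial Matrix

section

variable {R : Type*} [CommRing R]

theorem X_pow_sub_one_dvd_cyclotomic_prime_pow_sub {p n j : ℕ} (hp : p.Prime)
    (hn : n ∣ p ^ j) : X ^ n - 1 ∣ cyclotomic (p ^ (j + 1)) R - C (p : R) := by
  have hC : C (p : R) = ∑ _i ∈ Finset.range p, (1 : R[X]) := by simp
  rw [cyclotomic_prime_pow_eq_geom_sum hp, hC, ← Finset.sum_sub_distrib]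
  refine Finset.dvd_sum fun i _ => ?_
  obtain ⟨c, hc⟩ := hn.mul_right i
  rw [← pow_mul, hc, pow_mul]
  exact sub_one_dvd_pow_sub_one _ c

theorem cyclotomic_prime_pow_dvd_cyclotomic_prime_pow_sub {p h l : ℕ} (hp : p.Prime)
    (hl : h < l) : cyclotomic (p ^ h) R ∣ cyclotomic (p ^ l) R - C (p : R) := by
  obtain ⟨j, rfl⟩ : ∃ j, l = j + 1 := ⟨l - 1, by omega⟩
  exact (cyclotomic.dvd_X_pow_sub_one _ R).trans
    (X_pow_sub_one_dvd_cyclotomic_prime_pow_sub hp (pow_dvd_pow p (by omega)))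

theorem X_pow_natDegree_modByMonic {g : R[X]} (hg : g.Monic) :
    X ^ g.natDegree %ₘ g = X ^ g.natDegree - g := by
  nontriviality R
  refine (div_modByMonic_unique 1 _ hg ⟨by rw [mul_one, sub_add_cancel], ?_⟩).2
  have hdeg : (X ^ g.natDegree : R[X]).degree = g.degree := by
    rw [degree_X_pow, degree_eq_natDegree hg.ne_zero]
  exact hdeg ▸ degree_sub_lt_left hdeg (monic_X_pow _).ne_zero (by rw [leadingCoeff_X_pow, hg])

theorem companion_eq_reindex_transpose_leftMulMatrix {g : R[X]} (hg : g.Monic) :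
    companion g = reindex Fin.revPerm Fin.revPerm
      (Algebra.leftMulMatrix (AdjoinRoot.powerBasisAux' hg) (AdjoinRoot.root g))ᵀ := by
  ext i j
  rw [reindex_apply, submatrix_apply, transpose_apply, Algebra.leftMulMatrix_eq_repr_mul]
  have hb : ∀ k : Fin g.natDegree, AdjoinRoot.powerBasisAux' hg k = AdjoinRoot.root g ^ (k : ℕ) :=
    (AdjoinRoot.powerBasis' hg).basis_eq_pow
  rw [hb, ← pow_succ', AdjoinRoot.powerBasisAux'_repr_apply_to_fun, ← AdjoinRoot.mk_X, ← map_pow,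
    AdjoinRoot.modByMonicHom_mk]
  simp only [Fin.revPerm_symm, Fin.revPerm_apply, Fin.val_rev, companion, of_apply]
  rcases Nat.eq_zero_or_pos i with hi | hi
  · have := j.isLt
    rw [if_pos hi, hi, show g.natDegree - (0 + 1) + 1 = g.natDegree by omega,
      X_pow_natDegree_modByMonic hg, coeff_sub, coeff_X_pow, if_neg (by omega), zero_sub,
      Nat.sub_sub, add_comm 1]
  · have := i.isLt
    nontriviality R
    rw [if_neg hi.ne', (modByMonic_eq_self_iff hg).2 ?_, coeff_X_pow]
    · split_ifs <;> first | rfl | omega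
    · rw [degree_X_pow, degree_eq_natDegree hg.ne_zero]
      exact_mod_cast (by omega : g.natDegree - (i + 1) + 1 < g.natDegree)

theorem AdjoinRoot.minpoly_root_of_monic {g : R[X]} (hg : g.Monic) :
    minpoly R (AdjoinRoot.root g) = g := by
  nontriviality R
  refine (minpoly.unique' R _ hg (AdjoinRoot.aeval_eq g ▸ AdjoinRoot.mk_self) fun q hq => ?_).symm
  rw [or_iff_not_imp_left]
  intro hq0 hroot
  have hdim := (AdjoinRoot.powerBasis' hg).dim_le_degree_of_root hq0 hroot
  rw [AdjoinRoot.powerBasis'_dim, ← degree_eq_natDegree hg.ne_zero] at hdim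
  exact hq.not_ge hdim

theorem charpoly_companion {g : R[X]} (hg : g.Monic) : (companion g).charpoly = g := by
  rw [companion_eq_reindex_transpose_leftMulMatrix hg]
  exact (charpoly_reindex _ _).trans <| (charpoly_transpose _).trans <|
    (charpoly_leftMulMatrix (AdjoinRoot.powerBasis' hg)).trans
      (AdjoinRoot.minpoly_root_of_monic hg)

theorem aeval_companion_eq_of_dvd_sub {g f f' : R[X]} (hg : g.Monic) (hdvd : g ∣ f - f') :
    aeval (companion g) f = aeval (companion g) f' := by
  obtain ⟨q, hq⟩ := hdvd
  have hself : aeval (companion g) g = 0 := by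
    simpa only [charpoly_companion hg] using aeval_self_charpoly (companion g)
  rw [← sub_eq_zero, ← map_sub, hq, map_mul, hself, zero_mul]

end

theorem stmt15_general (p h k n m : ℕ) (hp : p.Prime) (hk : 1 ≤ k)
    (hn : n = p ^ h) (hm : m = n * p ^ k) :
    (Polynomial.cyclotomic n ℤ ∣
      Polynomial.cyclotomic m ℤ - Polynomial.C (p : ℤ)) ∧
    Polynomial.aeval (companion (Polynomial.cyclotomic n ℤ))
      (Polynomial.cyclotomic m ℤ) = (p : ℤ) • 1 := by
  have hdvd : cyclotomic n ℤ ∣ cyclotomic m ℤ - C (p : ℤ) := by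
    rw [hm, hn, ← pow_add]
    exact cyclotomic_prime_pow_dvd_cyclotomic_prime_pow_sub hp (by omega)
  refine ⟨hdvd, ?_⟩
  rw [aeval_companion_eq_of_dvd_sub (cyclotomic.monic n ℤ) hdvd, aeval_C,
    Algebra.algebraMap_eq_smul_one]

/-- For a prime `p`, `h ≥ 1`, `k ≥ 1`, `n = p^h`, `m = n·p^k`, one has
`Φ_m(t) ≡ p (mod Φ_n(t))` in `ℤ[t]`, and consequently `Φ_m(C_{Φ_n}) = p·I`. -/
theorem stmt15 (p h k n m : ℕ) (hp : p.Prime) (hh : 1 ≤ h) (hk : 1 ≤ k)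
    (hn : n = p ^ h) (hm : m = n * p ^ k) :
    (Polynomial.cyclotomic n ℤ ∣
      Polynomial.cyclotomic m ℤ - Polynomial.C (p : ℤ)) ∧
    Polynomial.aeval (companion (Polynomial.cyclotomic n ℤ))
      (Polynomial.cyclotomic m ℤ) = (p : ℤ) • 1 :=
  stmt15_general p h k n m hp hk hn hm
end

section
/- Let R be an integral domain, g(t) ∈ R[t] monic of degree n, and f(t) ∈ R[t]. Then the rank of f(C_g) (over the fraction field of R) equals n minus the degree of the monic greatest common divisor of f(t) and g(t) computed over the fraction field; equivalently, it equals the number of roots of g (with multiplicity, in an algebraic closure) that are not roots of f. -/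
/-!
Over the fraction field `K`, with `G = g.map φ`, the matrix `C_G` is, up to transposition and
reversing the order of the basis, the matrix of multiplication by `t` on `A = K[t]/(G)` in the
basis `1, t, …, t^(n-1)`. Hence `f(C_G)` has the rank of multiplication by `f` on `A`, whose image
is the ideal `(f)/(G)`; its codimension is `dim K[t]/(G, f) = dim K[t]/(gcd(f, G)) = deg gcd(f, G)`.
-/

open Polynomial Matrix

namespace Matrix

variable {R : Type*} [CommRing R] {n : Type*} [Fintype n] [DecidableEq n]

theorem aeval_transpose (M : Matrix n n R) (p : R[X]) : aeval Mᵀ p = (aeval M p)ᵀ := by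
  simpa [aeval_op_apply] using aeval_algHom_apply (transposeAlgEquiv n R R).toAlgHom M p

theorem aeval_submatrix_equiv_self {m : Type*} [Fintype m] [DecidableEq m] (M : Matrix m m R)
    (e : n ≃ m) (p : R[X]) : aeval (M.submatrix e e) p = (aeval M p).submatrix e e := by
  simpa using aeval_algHom_apply (reindexAlgEquiv R R e.symm).toAlgHom M p

theorem map_aeval {S : Type*} [CommRing S] (φ : R →+* S) (M : Matrix n n R) (p : R[X]) :
    (aeval M p).map φ = aeval (M.map φ) (p.map φ) :=
  map_aeval_eq_aeval_map (ψ := φ.mapMatrix) (by ext; simp [algebraMap_matrix_apply, apply_ite φ])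
    p M

end Matrix

namespace Algebra

theorem rank_leftMulMatrix {K A ι : Type*} [Field K] [Ring A] [Algebra K A] [Fintype ι]
    [DecidableEq ι] (b : Module.Basis ι K A) (x : A) :
    (leftMulMatrix b x).rank = Module.finrank K (LinearMap.range (lmul K A x)) := by
  rw [leftMulMatrix_apply, rank_eq_finrank_range_toLin _ b b, toLin_toMatrix]

theorem range_lmul_eq_restrictScalars_span {K A : Type*} [CommRing K] [CommRing A] [Algebra K A]
    (a : A) : LinearMap.range (lmul K A a) = (Ideal.span {a}).restrictScalars K := by
  ext x
  simp [Ideal.mem_span_singleton', mul_comm]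

end Algebra

namespace AdjoinRoot

variable {K : Type*} [Field K] [DecidableEq K[X]]

theorem finrank_quotient_span_mk (G F : K[X]) :
    Module.finrank K (AdjoinRoot G ⧸ Ideal.span {mk G F}) =
      (EuclideanDomain.gcd F G).natDegree := by
  have hspan : Ideal.span {mk G F} =
      (Ideal.span {F}).map (Ideal.Quotient.mkₐ K (Ideal.span {G})) := by
    rw [Ideal.map_span, Set.image_singleton]; rfl
  rw [hspan]
  refine (DoubleQuot.quotQuotEquivQuotSupₐ K _ _).toLinearEquiv.finrank_eq.trans ?_
  rw [← Ideal.span_insert, Set.pair_comm, ← EuclideanDomain.span_gcd,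
    finrank_quotient_span_eq_natDegree]

theorem finrank_range_lmul_mk {G : K[X]} (hG : G ≠ 0) (F : K[X]) :
    Module.finrank K (LinearMap.range (Algebra.lmul K (AdjoinRoot G) (mk G F))) =
      G.natDegree - (EuclideanDomain.gcd F G).natDegree := by
  have := (powerBasis hG).finite
  have hrank_nullity := Submodule.finrank_quotient_add_finrank
    (LinearMap.range (Algebra.lmul K (AdjoinRoot G) (mk G F)))
  rw [Algebra.range_lmul_eq_restrictScalars_span,
    (Submodule.Quotient.restrictScalarsEquiv K _).finrank_eq, finrank_quotient_span_mk,
    (powerBasis hG).finrank, powerBasis_dim] at hrank_nullity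
  rw [Algebra.range_lmul_eq_restrictScalars_span]
  omega

end AdjoinRoot

theorem companion_map {R S : Type*} [CommRing R] [CommRing S] [Nontrivial S] (φ : R →+* S)
    {g : R[X]} (hg : g.Monic) :
    (companion g).map φ = (companion (g.map φ)).submatrix (finCongr (hg.natDegree_map φ).symm)
      (finCongr (hg.natDegree_map φ).symm) := by
  ext i j
  simp [companion, apply_ite φ, hg.natDegree_map φ]

theorem companion_eq_leftMulMatrix_root {K : Type*} [Field K] {G : K[X]} (hG : G.Monic) :
    companion G = (Algebra.leftMulMatrix (AdjoinRoot.powerBasisAux hG.ne_zero)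
      (AdjoinRoot.root G))ᵀ.submatrix Fin.revPerm Fin.revPerm := by
  have hmat := (AdjoinRoot.powerBasis hG.ne_zero).leftMulMatrix
  rw [PowerBasis.minpolyGen_eq, AdjoinRoot.minpoly_powerBasis_gen_of_monic hG] at hmat
  ext i j
  -- `(powerBasis _).dim` is `G.natDegree` only up to unfolding, hence `change` rather than `rw`
  change _ = Algebra.leftMulMatrix (AdjoinRoot.powerBasis hG.ne_zero).basis
    (AdjoinRoot.powerBasis hG.ne_zero).gen (Fin.rev j) (Fin.rev i)
  rw [hmat]
  change _ = if ((Fin.rev i : Fin G.natDegree) : ℕ) + 1 = G.natDegree then -G.coeff (Fin.rev j : ℕ)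
    else if ((Fin.rev j : Fin G.natDegree) : ℕ) = (Fin.rev i : ℕ) + 1 then 1 else 0
  simp only [companion, of_apply, Fin.val_rev]
  have := i.isLt
  have := j.isLt
  split_ifs <;> first | rfl | omega | (congr 2; omega)

theorem rank_aeval_companion {K : Type*} [Field K] [DecidableEq K[X]] {G : K[X]} (hG : G.Monic)
    (F : K[X]) :
    (aeval (companion G) F).rank = G.natDegree - (EuclideanDomain.gcd F G).natDegree := by
  rw [companion_eq_leftMulMatrix_root hG, aeval_submatrix_equiv_self, rank_submatrix,
    aeval_transpose, rank_transpose, aeval_algHom_apply, AdjoinRoot.aeval_eq,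
    Algebra.rank_leftMulMatrix, AdjoinRoot.finrank_range_lmul_mk hG.ne_zero]

/-- For an integral domain `R` with fraction field `K`, a monic `g` of degree `n`, and
`f ∈ R[t]`, the rank of `f(C_g)` over `K` equals `n` minus the degree of the (monic)
gcd of `f` and `g` computed over `K`. -/
theorem stmt19 {R : Type*} [CommRing R] [IsDomain R] (g f : R[X]) (hg : g.Monic) :
    letI K := FractionRing R
    letI φ : R →+* K := algebraMap R K
    haveI : DecidableEq (Polynomial K) := Classical.decEq _
    ((Polynomial.aeval (companion g) f).map φ).rank =
      g.natDegree - (EuclideanDomain.gcd (f.map φ) (g.map φ)).natDegree := by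
  -- `classical` would produce a different instance from the one in the statement
  let _ : DecidableEq (FractionRing R)[X] := Classical.decEq _
  rw [map_aeval, companion_map (algebraMap R (FractionRing R)) hg, aeval_submatrix_equiv_self,
    rank_submatrix, rank_aeval_companion (hg.map _), hg.natDegree_map]
end
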